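/- The softmax function s : ℝ^K → Δ^K is 2-Lipschitz from (ℝ^K, ‖·‖_2) to (ℝ^K, ‖·‖_1): for all y, ȳ ∈ ℝ^K, ‖s(y) − s(ȳ)‖_1 ≤ 2‖y − ȳ‖_2. -/

import Mathlib

open scoped BigOperators

/-- The softmax function `s : ℝ^K → Δ^K`. -/
noncomputable def softmax {K : ℕ} (o : Fin K → ℝ) (k : Fin K) : ℝ :=
  Real.exp (o k) / ∑ j, Real.exp (o j)

/-!
Along the segment `γ t = y + t (ȳ - y)` the softmax moves with velocity
`s_k (v_k - ⟨s, v⟩)`, `v = ȳ - y`, whose `ℓ¹` norm is `∑ s_k |v_k - ⟨s, v⟩| ≤ 2 max |v_k| ≤ 2‖v‖₂`,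
since `⟨s, v⟩` is an average of the `v_k`. A mean value inequality in the `ℓ¹` norm concludes.
-/

open Finset

theorem sum_abs_sub_le_of_hasDerivAt {ι : Type*} [Fintype ι] {F F' : ℝ → ι → ℝ} {C : ℝ}
    (hF : ∀ t ∈ Set.Icc (0 : ℝ) 1, ∀ i, HasDerivAt (fun t => F t i) (F' t i) t)
    (hF' : ∀ t ∈ Set.Icc (0 : ℝ) 1, ∑ i, |F' t i| ≤ C) :
    ∑ i, |F 1 i - F 0 i| ≤ C := by
  -- Pair the curve with the sign pattern of its total displacement to reduce to one dimension.
  set σ : ι → ℝ := fun i => SignType.sign (F 1 i - F 0 i)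
  have hσ : ∀ i, |σ i| ≤ 1 := fun i => by
    rcases lt_trichotomy (F 1 i - F 0 i) 0 with h | h | h <;> simp [σ, h, sign_neg, sign_pos]
  have hderiv : ∀ t ∈ Set.Icc (0 : ℝ) 1,
      HasDerivWithinAt (fun t => ∑ i, σ i * F t i) (∑ i, σ i * F' t i) (Set.Icc 0 1) t :=
    fun t ht => (HasDerivAt.fun_sum fun i _ => (hF t ht i).const_mul (σ i)).hasDerivWithinAt
  have hbound : ∀ t ∈ Set.Ico (0 : ℝ) 1, ‖∑ i, σ i * F' t i‖ ≤ C := fun t ht =>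
    calc ‖∑ i, σ i * F' t i‖ ≤ ∑ i, |σ i| * |F' t i| := by
          simpa only [Real.norm_eq_abs, abs_mul] using
            abs_sum_le_sum_abs (fun i => σ i * F' t i) univ
      _ ≤ ∑ i, |F' t i| := sum_le_sum fun i _ =>
          mul_le_of_le_one_left (abs_nonneg _) (hσ i)
      _ ≤ C := hF' t (Set.Ico_subset_Icc_self ht)
  have := norm_image_sub_le_of_norm_deriv_le_segment_01' hderiv hbound
  simpa only [Real.norm_eq_abs, ← sum_sub_distrib, ← mul_sub, σ, sign_mul_self,
    abs_of_nonneg (sum_nonneg fun i _ => abs_nonneg (F 1 i - F 0 i))] using this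

theorem sum_mul_abs_sub_sum_mul_le {ι : Type*} [Fintype ι] {p v : ι → ℝ} {M : ℝ}
    (hp : ∀ i, 0 ≤ p i) (hp_sum : ∑ i, p i = 1) (hv : ∀ i, |v i| ≤ M) :
    ∑ i, p i * |v i - ∑ j, p j * v j| ≤ 2 * M := by
  have hmean : |∑ j, p j * v j| ≤ M :=
    calc |∑ j, p j * v j| ≤ ∑ j, p j * |v j| := by
          simpa only [abs_mul, abs_of_nonneg (hp _)] using
            abs_sum_le_sum_abs (fun j => p j * v j) univ
      _ ≤ ∑ j, p j * M := sum_le_sum fun j _ => mul_le_mul_of_nonneg_left (hv j) (hp j)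
      _ = M := by rw [← sum_mul, hp_sum, one_mul]
  calc ∑ i, p i * |v i - ∑ j, p j * v j| ≤ ∑ i, p i * (2 * M) :=
        sum_le_sum fun i _ => mul_le_mul_of_nonneg_left
          ((abs_sub _ _).trans (by linarith [hv i])) (hp i)
    _ = 2 * M := by rw [← sum_mul, hp_sum, one_mul]

section Softmax

variable {K : ℕ}

theorem softmax_nonneg (o : Fin K → ℝ) (k : Fin K) : 0 ≤ softmax o k :=
  div_nonneg (Real.exp_nonneg _) (sum_nonneg fun _ _ => Real.exp_nonneg _)

variable [Nonempty (Fin K)]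

theorem sum_exp_pos (o : Fin K → ℝ) : 0 < ∑ j, Real.exp (o j) :=
  sum_pos (fun _ _ => Real.exp_pos _) univ_nonempty

theorem sum_softmax (o : Fin K → ℝ) : ∑ k, softmax o k = 1 := by
  simp only [softmax, ← sum_div, div_self (sum_exp_pos o).ne']

theorem hasDerivAt_softmax {γ : ℝ → Fin K → ℝ} {γ' : Fin K → ℝ} {t : ℝ}
    (hγ : ∀ j, HasDerivAt (fun t => γ t j) (γ' j) t) (k : Fin K) :
    HasDerivAt (fun t => softmax (γ t) k)
      (softmax (γ t) k * (γ' k - ∑ j, softmax (γ t) j * γ' j)) t := by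
  have hZ := sum_exp_pos (γ t)
  refine ((hγ k).exp.div (HasDerivAt.fun_sum fun j _ => (hγ j).exp) hZ.ne').congr_deriv ?_
  simp only [softmax, div_mul_eq_mul_div, ← sum_div]
  field_simp

end Softmax

/-- The softmax is 2-Lipschitz from `(ℝ^K, ‖·‖₂)` to `(ℝ^K, ‖·‖₁)`:
`‖s(y) − s(ȳ)‖₁ ≤ 2‖y − ȳ‖₂`. -/
theorem softmax_two_lipschitz_l2_l1 {K : ℕ} (y ybar : Fin K → ℝ) :
    ∑ k, |softmax y k - softmax ybar k| ≤
      2 * Real.sqrt (∑ k, (y k - ybar k) ^ 2) := by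
  rcases isEmpty_or_nonempty (Fin K) with _ | _
  · simp
  set v : Fin K → ℝ := fun k => ybar k - y k
  have hsegment : ∀ t k, HasDerivAt (fun t => y k + t * v k) (v k) t :=
    fun t k => (hasDerivAt_mul_const (v k)).const_add (y k)
  have hv : ∀ k, |v k| ≤ Real.sqrt (∑ k, (y k - ybar k) ^ 2) := fun k =>
    Real.abs_le_sqrt <| by
      simpa only [v, ← neg_sub (y k), neg_sq] using
        single_le_sum (fun j _ => sq_nonneg (y j - ybar j)) (mem_univ k)
  have := sum_abs_sub_le_of_hasDerivAt
    (fun t _ => hasDerivAt_softmax (hsegment t))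
    (fun t _ => by
      simpa only [abs_mul, abs_of_nonneg (softmax_nonneg _ _)] using
        sum_mul_abs_sub_sum_mul_le (softmax_nonneg _) (sum_softmax _) hv)
  simpa only [v, zero_mul, add_zero, one_mul, add_sub_cancel, abs_sub_comm] using this
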